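/- In every right universal Osborn loop Q, the identity y·(u\(u/x)) = ((y·x)·((u·x)\u))/x holds for all x,y,u ∈ Q. -/

import Mathlib

/-- A loop: a set with multiplication, left division `ld`, right division `rd`
and a two-sided identity `e`. -/
structure LoopStr (Q : Type*) where
  mul : Q → Q → Q
  ld : Q → Q → Q
  rd : Q → Q → Q
  e : Q
  mul_ld : ∀ x y, mul x (ld x y) = y
  rd_mul : ∀ x y, mul (rd y x) x = y
  ld_mul : ∀ x y, ld x (mul x y) = y
  mul_rd : ∀ x y, rd (mul y x) x = y
  one_mul : ∀ x, mul e x = x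
  mul_one : ∀ x, mul x e = x

namespace LoopStr

variable {Q : Type*} (L : LoopStr Q)

/-- The left inverse `x^λ` of `x`, i.e. the unique element with `x^λ · x = e`. -/
def lam (x : Q) : Q := L.rd L.e x

/-- The right inverse `x^ρ` of `x`, i.e. the unique element with `x · x^ρ = e`. -/
def rho (x : Q) : Q := L.ld x L.e

/-- A binary operation `op` with identity `e'` is Osborn if, whenever `xl` is a
left inverse of `x` w.r.t. `op`, the Osborn identity
`x(yz·x) = (x(y·x^λ·x))·(zx)` holds. -/
def IsOsbornOp (op : Q → Q → Q) (e' : Q) : Prop :=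
  ∀ x y z xl, op xl x = e' →
    op x (op (op y z) x) = op (op x (op (op y xl) x)) (op z x)

/-- The `u,v`-principal isotope: `x ∗ y = (x/v)·(u\y)`; its identity is `u·v`. -/
def isotope (u v : Q) : Q → Q → Q := fun x y => L.mul (L.rd x v) (L.ld u y)

/-- `Q` is a universal Osborn loop: every `u,v`-principal isotope is Osborn. -/
def Universal : Prop := ∀ u v, IsOsbornOp (L.isotope u v) (L.mul u v)

/-- `Q` is a left universal Osborn loop: every left principal isotope
`x ∗ y = (x/v)·y` (identity `v`) is Osborn. -/
def LeftUniversal : Prop := ∀ v, IsOsbornOp (fun x y => L.mul (L.rd x v) y) v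

/-- `Q` is a right universal Osborn loop: every right principal isotope
`x ∗ y = x·(u\y)` (identity `u`) is Osborn. -/
def RightUniversal : Prop := ∀ u, IsOsbornOp (fun x y => L.mul x (L.ld u y)) u

end LoopStr


/-!
In an Osborn loop one has `(y·x)·x^ρ = (y·x^λ)·x`. In the right principal isotope
`a ∗ b = a·(u\b)` of `L`, the element `u·x` has left inverse `u/x` and right inverse
`u·((u·x)\u)`, so this identity, applied to `y` and `u·x`, reads
`(y·x)·((u·x)\u) = (y·(u\(u/x)))·x`; dividing by `x` gives the claim.
-/

namespace LoopStr

variable {Q : Type*}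

section Basic

variable (L : LoopStr Q)

theorem ld_self (a : Q) : L.ld a a = L.e := by
  simpa only [L.mul_one] using L.ld_mul a L.e

theorem mul_left_cancel {a b c : Q} (h : L.mul a b = L.mul a c) : b = c := by
  rw [← L.ld_mul a b, h, L.ld_mul]

theorem mul_right_cancel {a b c : Q} (h : L.mul a b = L.mul c b) : a = c := by
  rw [← L.mul_rd b a, h, L.mul_rd]

theorem lam_mul_self (x : Q) : L.mul (L.lam x) x = L.e :=
  L.rd_mul x L.e

theorem lam_rho (x : Q) : L.lam (L.rho x) = x := by
  simpa only [lam, rho, L.mul_ld] using L.mul_rd (L.rho x) x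

def rightIsotope (u : Q) : LoopStr Q where
  mul a b := L.mul a (L.ld u b)
  ld a b := L.mul u (L.ld a b)
  rd a b := L.rd a (L.ld u b)
  e := u
  mul_ld a b := by simp only [L.ld_mul, L.mul_ld]
  rd_mul a b := L.rd_mul _ b
  ld_mul a b := by simp only [L.ld_mul, L.mul_ld]
  mul_rd a b := L.mul_rd _ b
  one_mul a := L.mul_ld u a
  mul_one a := by simp only [L.ld_self, L.mul_one]

theorem RightUniversal.isOsbornOp_rightIsotope {L : LoopStr Q} (h : L.RightUniversal)
    (u : Q) : IsOsbornOp (L.rightIsotope u).mul (L.rightIsotope u).e :=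
  h u

end Basic

namespace IsOsbornOp

variable {L : LoopStr Q}

local infixl:70 " ⋆ " => L.mul

theorem mul_mul_lam_mul_mul_self (ho : IsOsbornOp L.mul L.e) (x y : Q) :
    (x ⋆ ((y ⋆ L.lam x) ⋆ x)) ⋆ x = x ⋆ (y ⋆ x) := by
  simpa only [L.mul_one, L.one_mul] using (ho x y L.e (L.lam x) (L.lam_mul_self x)).symm

theorem mul_lam_lam_mul_self (ho : IsOsbornOp L.mul L.e) (x : Q) :
    x ⋆ ((L.lam x ⋆ L.lam x) ⋆ x) = L.e := by
  apply L.mul_right_cancel (b := x)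
  rw [ho.mul_mul_lam_mul_mul_self, L.lam_mul_self, L.mul_one, L.one_mul]

theorem mul_lam_mul_mul_self (ho : IsOsbornOp L.mul L.e) (x z : Q) :
    x ⋆ ((L.lam x ⋆ z) ⋆ x) = z ⋆ x := by
  rw [ho x (L.lam x) z (L.lam x) (L.lam_mul_self x), ho.mul_lam_lam_mul_self, L.one_mul]

theorem lam_mul_mul_mul_lam_mul (ho : IsOsbornOp L.mul L.e) (x y : Q) :
    L.lam x ⋆ (x ⋆ ((y ⋆ L.lam x) ⋆ x)) = y := by
  apply L.mul_right_cancel (b := x)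
  apply L.mul_left_cancel (a := x)
  rw [ho.mul_lam_mul_mul_self, ho.mul_mul_lam_mul_mul_self]

theorem mul_mul_rho (ho : IsOsbornOp L.mul L.e) (x y : Q) :
    (y ⋆ x) ⋆ L.rho x = (y ⋆ L.lam x) ⋆ x := by
  have hρ := ho.lam_mul_mul_mul_lam_mul (L.rho x) (x ⋆ ((y ⋆ L.lam x) ⋆ x))
  rw [L.lam_rho, ho.mul_mul_lam_mul_mul_self] at hρ
  calc (y ⋆ x) ⋆ L.rho x = L.rho x ⋆ ((x ⋆ (y ⋆ x)) ⋆ L.rho x) := by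
        simpa only [L.lam_rho] using (ho.mul_lam_mul_mul_self (L.rho x) (y ⋆ x)).symm
    _ = (y ⋆ L.lam x) ⋆ x := L.mul_left_cancel hρ

end IsOsbornOp

end LoopStr

open LoopStr

theorem right_universal_osborn_OSI01 {Q : Type*} (L : LoopStr Q)
    (h : L.RightUniversal) (x y u : Q) :
    L.mul y (L.ld u (L.rd u x)) =
      L.rd (L.mul (L.mul y x) (L.ld (L.mul u x) u)) x := by
  have key := (h.isOsbornOp_rightIsotope u).mul_mul_rho (L.mul u x) y
  simp only [rightIsotope, lam, rho, L.ld_mul] at key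
  rw [key, L.mul_rd]
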